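/- Two permutations π, σ ∈ S_n have the same skeleton (i.e., π⁻¹ · s(π) = σ⁻¹ · s(σ) as group elements of S_n) if and only if they lie in the same orbit of the polyurethane group 𝒫_n acting on S_n. -/

import Mathlib

/-!
Cutting a word at its maximum, `s(LMR) = s(L) s(R) M`, shows that `π⁻¹ · s(π)` lists the
in-order positions of the nodes of the decreasing binary tree of `π` in post-order; so it
determines, and is determined by, the shape of that tree.

A toggle `p_i` that moves `π` swaps `i` and `i + 1` while a larger entry lies between them.
Descending the tree, `i` and `i + 1` stay together until they fall into different subtrees of
some node, and there the swap is order-preserving on each subtree, so the shape is unchanged.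

Conversely, let `π` and `σ` have the same shape, and suppose `π` already places `1, …, k`
as `σ` does, but holds `i + 1 > k + 1` where `σ` holds `k + 1`. Whether a position holds the
largest entry between itself and another position depends only on the shape. If no entry larger
than `i + 1` separated `i` and `i + 1` in `π`, the position of `i + 1` would dominate that of
`i` in `π`, hence in `σ`; then `σ` holds an entry `≤ k` at the position of `i` in `π`, where
`π` must hold that same entry instead of `i`. So `p_i` moves `π` and lowers that entry; iterating sorts `π` into `σ`.
-/

/-- `l` is a permutation of `{1, …, n}`, written as a word. -/
def IsPermList (n : ℕ) (l : List ℕ) : Prop := l.Perm (List.range' 1 n)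

/-- The word obtained from `l` by exchanging the positions of the entries `i` and `i+1`. -/
def swapEntries (i : ℕ) (l : List ℕ) : List ℕ :=
  l.map fun x => if x = i then i + 1 else if x = i + 1 then i else x

/-- Some entry larger than `i+1` appears (strictly) between the entries `i` and `i+1`
in the word `l`. -/
def ToggleApplies (i : ℕ) (l : List ℕ) : Prop :=
  ∃ a ∈ l, i + 1 < a ∧
    min (l.idxOf i) (l.idxOf (i + 1)) < l.idxOf a ∧
    l.idxOf a < max (l.idxOf i) (l.idxOf (i + 1))

open scoped Classical in
/-- The polyurethane toggle `p i`. -/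
noncomputable def toggle (i : ℕ) (l : List ℕ) : List ℕ :=
  if ToggleApplies i l then swapEntries i l else l

lemma max_getD_mem (l : List ℕ) (h : l ≠ []) : l.max?.getD 0 ∈ l := by
  rcases hm : l.max? with _ | m'
  · exact absurd (List.max?_eq_none_iff.mp hm) h
  · simpa using List.max?_mem hm

lemma length_takeWhile_lt (p : ℕ → Bool) (l : List ℕ) (x : ℕ) (hx : x ∈ l) (hpx : p x = false) :
    (l.takeWhile p).length < l.length := by
  rcases Nat.lt_or_ge (l.takeWhile p).length l.length with h | h
  · exact h
  · have := List.takeWhile_eq_self_iff.mp ((List.takeWhile_sublist p).eq_of_length_le h) x hx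
    rw [hpx] at this; exact absurd this (by simp)

lemma length_dropWhile_tail_lt (p : ℕ → Bool) (l : List ℕ) (h : l ≠ []) :
    ((l.dropWhile p).tail).length < l.length := by
  have h1 : (l.dropWhile p).length ≤ l.length := (List.dropWhile_sublist _).length_le
  have h2 : ((l.dropWhile p).tail).length ≤ (l.dropWhile p).length - 1 := by
    simp [List.length_tail]
  have : 0 < l.length := List.length_pos_iff.mpr h
  omega

/-- West's stack-sorting map `s`: `s([]) = []` and `s(LmR) = s(L) s(R) m`,
where `m` is the largest entry. -/
def stackSort : List ℕ → List ℕ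
  | [] => []
  | a :: rest =>
    stackSort ((a :: rest).takeWhile (· ≠ (a :: rest).max?.getD 0)) ++
      stackSort (((a :: rest).dropWhile (· ≠ (a :: rest).max?.getD 0)).tail) ++
      [(a :: rest).max?.getD 0]
termination_by l => l.length
decreasing_by
  · exact length_takeWhile_lt _ _ _ (max_getD_mem (a :: rest) (by simp)) (by simp)
  · exact length_dropWhile_tail_lt _ _ (by simp)

/-- The inverse of the permutation `l` of `{1, …, n}`, as a word: its `k`-th entry is the
position (1-indexed) of the entry `k` in `l`. -/
def invw (l : List ℕ) : List ℕ := (List.range' 1 l.length).map fun k => l.idxOf k + 1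

/-- The composition `l · m` of permutations written as words: `(l · m) j = l (m j)`. -/
def compw (l m : List ℕ) : List ℕ := m.map fun k => l.getD (k - 1) 0

/-- The group element `π⁻¹ · s(π)`, which encodes the skeleton of `π`: two permutations of
`{1, …, n}` have the same skeleton if and only if their `skel`s coincide. -/
def skel (l : List ℕ) : List ℕ := compw (invw l) (stackSort l)

/-- One application of a polyurethane toggle `p i`, `i ∈ [n-1]`. -/
def ToggleStep (n : ℕ) (x y : List ℕ) : Prop :=
  ∃ i, 1 ≤ i ∧ i ≤ n - 1 ∧ y = toggle i x

/-- `x` and `y` lie in the same orbit of the polyurethane group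
`𝒫ₙ = ⟨p₁, …, p_{n-1}⟩` acting on permutations. -/
def OrbitRel (n : ℕ) : List ℕ → List ℕ → Prop := Relation.EqvGen (ToggleStep n)

namespace List

variable {α : Type*} {l : List α} {r : ℕ}

lemma getD_mem (hr : r < l.length) (d : α) : l.getD r d ∈ l := by
  rw [getD_eq_getElem _ _ hr]
  exact getElem_mem hr

variable [BEq α] [LawfulBEq α]

lemma getD_idxOf {a : α} (ha : a ∈ l) (d : α) : l.getD (l.idxOf a) d = a := by
  rw [getD_eq_getElem _ _ (idxOf_lt_length_iff.mpr ha), getElem_idxOf]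

lemma Nodup.idxOf_getD (hnd : l.Nodup) (hr : r < l.length) (d : α) :
    l.idxOf (l.getD r d) = r := by
  rw [getD_eq_getElem _ _ hr, hnd.idxOf_getElem]

end List

theorem Relation.EqvGen.apply_eq_of_invariant {α β : Type*} {r : α → α → Prop} {p : α → Prop}
    {f : α → β} (hp : ∀ x y, r x y → (p x ↔ p y)) (hf : ∀ x y, r x y → p x → f x = f y)
    {x y : α} (h : Relation.EqvGen r x y) (hx : p x) : f x = f y := by
  refine (?_ : (p x ↔ p y) ∧ (p x → f x = f y)).2 hx
  clear hx
  induction h with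
  | rel x y hxy => exact ⟨hp x y hxy, hf x y hxy⟩
  | refl => exact ⟨Iff.rfl, fun _ => rfl⟩
  | symm x y _ ih => exact ⟨ih.1.symm, fun hy => (ih.2 (ih.1.mpr hy)).symm⟩
  | trans x y z _ _ ih₁ ih₂ =>
    exact ⟨ih₁.1.trans ih₂.1, fun hx => (ih₁.2 hx).trans (ih₂.2 (ih₁.1.mp hx))⟩

namespace IsPermList

variable {n : ℕ} {l : List ℕ}

lemma length_eq (hl : IsPermList n l) : l.length = n := by
  simpa using List.Perm.length_eq hl

lemma mem_iff (hl : IsPermList n l) {x : ℕ} : x ∈ l ↔ 1 ≤ x ∧ x ≤ n := by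
  rw [List.Perm.mem_iff hl, List.mem_range'_1]
  omega

lemma nodup (hl : IsPermList n l) : l.Nodup :=
  hl.nodup_iff.mpr List.nodup_range'

lemma getD_mem_Icc {p : ℕ} (hl : IsPermList n l) (hp : p < n) :
    1 ≤ l.getD p 0 ∧ l.getD p 0 ≤ n :=
  hl.mem_iff.mp (List.getD_mem (hl.length_eq ▸ hp) 0)

end IsPermList

lemma swapEntries_eq_map_swap (i : ℕ) (l : List ℕ) :
    swapEntries i l = l.map (Equiv.swap i (i + 1)) :=
  rfl

@[simp]
lemma swapEntries_swapEntries (i : ℕ) (l : List ℕ) : swapEntries i (swapEntries i l) = l := by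
  simp [swapEntries_eq_map_swap, Function.comp_def]

lemma getD_swapEntries {i : ℕ} (hi : 1 ≤ i) (l : List ℕ) (p : ℕ) :
    (swapEntries i l).getD p 0 = Equiv.swap i (i + 1) (l.getD p 0) := by
  have h0 : Equiv.swap i (i + 1) 0 = 0 := Equiv.swap_apply_of_ne_of_ne (by omega) (by omega)
  conv_lhs => rw [swapEntries_eq_map_swap, ← h0]
  exact List.getD_map (l := l) (d := 0) _

lemma IsPermList.swapEntries {n i : ℕ} {l : List ℕ} (hi : 1 ≤ i) (hin : i < n)
    (hl : IsPermList n l) : IsPermList n (swapEntries i l) := by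
  rw [swapEntries_eq_map_swap]
  refine (hl.map _).trans <| (List.perm_ext_iff_of_nodup
    (List.Nodup.map (Equiv.injective _) List.nodup_range') List.nodup_range').mpr fun z => ?_
  simp only [List.mem_map, List.mem_range'_1]
  constructor
  · rintro ⟨w, hw, rfl⟩
    rw [Equiv.swap_apply_def]
    split_ifs <;> omega
  · refine fun hz => ⟨Equiv.swap i (i + 1) z, ?_, Equiv.swap_apply_self _ _ _⟩
    rw [Equiv.swap_apply_def]
    split_ifs <;> omega

namespace ToggleApplies

variable {i : ℕ} {P Q : List ℕ}

lemma of_append_left (hi : i ∈ P) (hi1 : i + 1 ∈ P) (h : ToggleApplies i (P ++ Q)) :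
    ToggleApplies i P := by
  obtain ⟨a, ha, hai, hmin, hmax⟩ := h
  rw [List.idxOf_append_of_mem hi, List.idxOf_append_of_mem hi1] at hmin hmax
  have hbound := max_lt (List.idxOf_lt_length_iff.mpr hi) (List.idxOf_lt_length_iff.mpr hi1)
  have haP : a ∈ P := by
    by_contra haP
    rw [List.idxOf_append_of_notMem haP] at hmax
    omega
  rw [List.idxOf_append_of_mem haP] at hmin hmax
  exact ⟨a, haP, hai, hmin, hmax⟩

lemma of_append_right (hi : i ∉ P) (hi1 : i + 1 ∉ P) (h : ToggleApplies i (P ++ Q)) :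
    ToggleApplies i Q := by
  obtain ⟨a, ha, hai, hmin, hmax⟩ := h
  rw [List.idxOf_append_of_notMem hi, List.idxOf_append_of_notMem hi1] at hmin hmax
  have haP : a ∉ P := by
    intro haP
    have := List.idxOf_lt_length_iff.mpr haP
    rw [List.idxOf_append_of_mem haP] at hmin
    omega
  rw [List.idxOf_append_of_notMem haP] at hmin hmax
  exact ⟨a, (List.mem_append.mp ha).resolve_left haP, hai, by omega, by omega⟩

end ToggleApplies

lemma isPermList_toggle_iff {n i : ℕ} {l : List ℕ} (hi : 1 ≤ i) (hin : i ≤ n - 1) :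
    IsPermList n (toggle i l) ↔ IsPermList n l := by
  unfold toggle
  split_ifs
  · exact ⟨fun h => by simpa using h.swapEntries hi (by omega), (·.swapEntries hi (by omega))⟩
  · rfl

namespace Polyurethane

lemma le_max?_getD {l : List ℕ} {x : ℕ} (hx : x ∈ l) : x ≤ l.max?.getD 0 := by
  rcases hm : l.max? with _ | m
  · simp [List.max?_eq_none_iff.mp hm] at hx
  · simpa using (List.max?_le_iff hm).mp le_rfl x hx

/-- The skeleton of a word: the shape of its decreasing binary plane tree. -/
def shape : List ℕ → BinaryTree Unit
  | [] => .nil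
  | a :: rest =>
    .node () (shape ((a :: rest).takeWhile (· ≠ (a :: rest).max?.getD 0)))
      (shape (((a :: rest).dropWhile (· ≠ (a :: rest).max?.getD 0)).tail))
termination_by l => l.length
decreasing_by
  · exact length_takeWhile_lt _ _ _ (max_getD_mem (a :: rest) (by simp)) (by simp)
  · exact length_dropWhile_tail_lt _ _ (by simp)

section Split

variable {L R : List ℕ} {M : ℕ}

lemma max?_getD_append_cons (hL : ∀ x ∈ L, x < M) (hR : ∀ x ∈ R, x ≤ M) :
    (L ++ M :: R).max?.getD 0 = M := by
  have hmem : M ∈ L ++ M :: R := by simp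
  refine le_antisymm ?_ (le_max?_getD hmem)
  have := max_getD_mem (L ++ M :: R) (List.ne_nil_of_mem hmem)
  simp only [List.mem_append, List.mem_cons] at this
  rcases this with h | h | h
  · exact (hL _ h).le
  · exact h.le
  · exact hR _ h

lemma takeWhile_append_cons (hL : M ∉ L) : (L ++ M :: R).takeWhile (· ≠ M) = L := by
  rw [List.takeWhile_append_of_pos (by simpa using fun x hx (h : x = M) => hL (h ▸ hx))]
  simp

lemma dropWhile_append_cons (hL : M ∉ L) : ((L ++ M :: R).dropWhile (· ≠ M)).tail = R := by
  rw [List.dropWhile_append_of_pos (by simpa using fun x hx (h : x = M) => hL (h ▸ hx))]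
  simp

lemma exists_eq_append_cons_max {l : List ℕ} (hl : l ≠ []) :
    ∃ L M R, l = L ++ M :: R ∧ (∀ x ∈ L, x < M) ∧ ∀ x ∈ R, x ≤ M := by
  obtain ⟨L, R, hML, hl, -⟩ := List.exists_erase_eq (max_getD_mem l hl)
  have hle : ∀ x ∈ L ++ l.max?.getD 0 :: R, x ≤ l.max?.getD 0 := fun x hx =>
    le_max?_getD (hl ▸ hx)
  refine ⟨L, _, R, hl, fun x hx => (hle x (by simp [hx])).lt_of_ne ?_,
    fun x hx => hle x (by simp [hx])⟩
  rintro rfl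
  exact hML hx

@[elab_as_elim]
lemma induction_on_max {motive : List ℕ → Prop} (nil : motive [])
    (append_cons : ∀ L M R, (∀ x ∈ L, x < M) → (∀ x ∈ R, x ≤ M) →
      motive L → motive R → motive (L ++ M :: R)) (l : List ℕ) : motive l := by
  induction hn : l.length using Nat.strong_induction_on generalizing l with
  | _ n ih =>
    rcases eq_or_ne l [] with rfl | hl
    · exact nil
    obtain ⟨L, M, R, rfl, hL, hR⟩ := exists_eq_append_cons_max hl
    subst hn
    exact append_cons L M R hL hR (ih _ (by simp) L rfl) (ih _ (by simp; omega) R rfl)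

lemma stackSort_append_cons (hL : ∀ x ∈ L, x < M) (hR : ∀ x ∈ R, x ≤ M) :
    stackSort (L ++ M :: R) = stackSort L ++ stackSort R ++ [M] := by
  have hML : M ∉ L := fun h => (hL M h).false
  obtain ⟨a, t, hat⟩ : ∃ a t, L ++ M :: R = a :: t := by cases L <;> simp
  rw [hat, stackSort, ← hat, max?_getD_append_cons hL hR, takeWhile_append_cons hML,
    dropWhile_append_cons hML]

lemma shape_append_cons (hL : ∀ x ∈ L, x < M) (hR : ∀ x ∈ R, x ≤ M) :
    shape (L ++ M :: R) = .node () (shape L) (shape R) := by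
  have hML : M ∉ L := fun h => (hL M h).false
  obtain ⟨a, t, hat⟩ : ∃ a t, L ++ M :: R = a :: t := by cases L <;> simp
  rw [hat, shape, ← hat, max?_getD_append_cons hL hR, takeWhile_append_cons hML,
    dropWhile_append_cons hML]

lemma idxOf_append_cons_of_mem_right (hnd : (L ++ M :: R).Nodup) {x : ℕ} (hx : x ∈ R) :
    (L ++ M :: R).idxOf x = L.length + 1 + R.idxOf x := by
  have hxL : x ∉ L := fun h => List.disjoint_of_nodup_append hnd h (List.mem_cons_of_mem _ hx)
  have hxM : M ≠ x := by
    rintro rfl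
    exact (List.nodup_cons.mp (List.nodup_append.mp hnd).2.1).1 hx
  rw [List.idxOf_append_of_notMem hxL, List.idxOf_cons_ne _ hxM]
  omega

lemma getD_append_cons_le (hL : ∀ x ∈ L, x < M) (hR : ∀ x ∈ R, x ≤ M) (r : ℕ) :
    (L ++ M :: R).getD r 0 ≤ M := by
  rcases lt_or_ge r (L ++ M :: R).length with hr | hr
  · rw [List.getD_eq_getElem _ _ hr]
    have := List.getElem_mem hr
    simp only [List.mem_append, List.mem_cons] at this
    rcases this with h | h | h
    exacts [(hL _ h).le, h.le, hR _ h]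
  · rw [List.getD_eq_default _ _ hr]
    exact Nat.zero_le M

lemma getD_append_cons_lt (hnd : (L ++ M :: R).Nodup) (hL : ∀ x ∈ L, x < M)
    (hR : ∀ x ∈ R, x ≤ M) {r : ℕ} (hr : r < (L ++ M :: R).length) (hrL : r ≠ L.length) :
    (L ++ M :: R).getD r 0 < M := by
  refine (getD_append_cons_le hL hR r).lt_of_ne fun h => hrL ?_
  rw [List.getD_eq_getElem _ _ hr] at h
  rw [← hnd.idxOf_getElem r hr, h, List.idxOf_append_of_notMem fun h => (hL M h).false]
  simp

end Split

lemma stackSort_perm (l : List ℕ) : (stackSort l).Perm l := by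
  induction l using induction_on_max with
  | nil => simp [stackSort]
  | append_cons L M R hL hR ihL ihR =>
    rw [stackSort_append_cons hL hR, List.append_assoc]
    exact ihL.append ((ihR.append_right _).trans (List.perm_append_singleton _ _))

@[simp]
lemma numNodes_shape (l : List ℕ) : (shape l).numNodes = l.length := by
  induction l using induction_on_max with
  | nil => simp [shape]
  | append_cons L M R hL hR ihL ihR => simp [shape_append_cons hL hR, ihL, ihR]; omega

/-- The in-order positions (counted from `1`) of the nodes of a tree, listed in post-order. -/
def postorder : BinaryTree Unit → List ℕ
  | .nil => []
  | .node _ L R => postorder L ++ (postorder R).map (· + (L.numNodes + 1)) ++ [L.numNodes + 1]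

@[simp]
lemma length_postorder (t : BinaryTree Unit) : (postorder t).length = t.numNodes := by
  induction t with
  | nil => rfl
  | node _ L R ihL ihR => simp [postorder, ihL, ihR]; omega

lemma postorder_injective : Function.Injective postorder := by
  intro t
  induction t with
  | nil => rintro (_ | ⟨_, _, _⟩) h <;> simp_all [postorder]
  | node _ L R ihL ihR =>
    rintro (_ | ⟨_, L', R'⟩) h
    · simp [postorder] at h
    simp only [postorder, List.append_assoc] at h
    have hsize : L.numNodes = L'.numNodes := by
      simpa using congrArg List.getLast? h
    obtain ⟨hL, h⟩ := List.append_inj h (by simp [hsize])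
    rw [hsize] at h
    have hR := (List.append_inj' h rfl).1
    rw [ihL hL, ihR (List.map_injective_iff.mpr (add_left_injective _) hR)]

lemma map_idxOf_stackSort {l : List ℕ} (hnd : l.Nodup) :
    (stackSort l).map (fun k => l.idxOf k + 1) = postorder (shape l) := by
  induction l using induction_on_max with
  | nil => simp [stackSort, shape, postorder]
  | append_cons L M R hL hR ihL ihR =>
    have hML : M ∉ L := fun h => (hL M h).false
    rw [stackSort_append_cons hL hR, shape_append_cons hL hR, postorder,
      ← ihL (List.nodup_append.mp hnd).1, ← ihR (List.nodup_append.mp hnd).2.1.of_cons,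
      numNodes_shape, List.map_append, List.map_append, List.map_map]
    congr 2
    · refine List.map_congr_left fun k hk => ?_
      rw [List.idxOf_append_of_mem ((stackSort_perm L).mem_iff.mp hk)]
    · refine List.map_congr_left fun k hk => ?_
      simp only [Function.comp_apply,
        idxOf_append_cons_of_mem_right hnd ((stackSort_perm R).mem_iff.mp hk)]
      omega
    · simp [List.idxOf_append_of_notMem hML]

lemma skel_eq_postorder_shape {n : ℕ} {l : List ℕ} (hl : IsPermList n l) :
    skel l = postorder (shape l) := by
  rw [← map_idxOf_stackSort hl.nodup, skel, compw]
  refine List.map_congr_left fun k hk => ?_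
  have hk := hl.mem_iff.mp ((stackSort_perm l).mem_iff.mp hk)
  rw [List.getD_eq_getElem _ _ (by simp [invw, hl.length_eq]; omega)]
  simp only [invw, List.getElem_map, List.getElem_range']
  congr 2
  omega

lemma strictMonoOn_swap {i : ℕ} {l : List ℕ} (h : ¬(i ∈ l ∧ i + 1 ∈ l)) :
    StrictMonoOn (Equiv.swap i (i + 1)) {x | x ∈ l} := by
  intro x hx y hy hxy
  have : (x ≠ i ∧ y ≠ i) ∨ (x ≠ i + 1 ∧ y ≠ i + 1) := by
    by_cases hi : i ∈ l
    · exact .inr ⟨fun h' => h ⟨hi, h' ▸ hx⟩, fun h' => h ⟨hi, h' ▸ hy⟩⟩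
    · exact .inl ⟨fun h' => hi (h' ▸ hx), fun h' => hi (h' ▸ hy)⟩
  simp only [Equiv.swap_apply_def]
  split_ifs <;> omega

lemma shape_map_of_strictMonoOn {f : ℕ → ℕ} {l : List ℕ} (hf : StrictMonoOn f {x | x ∈ l}) :
    shape (l.map f) = shape l := by
  induction l using induction_on_max with
  | nil => rfl
  | append_cons L M R hL hR ihL ihR =>
    have hM : M ∈ {x | x ∈ L ++ M :: R} := by simp
    rw [List.map_append, List.map_cons,
      shape_append_cons (by simpa using fun x hx => hf (by simp [hx]) hM (hL x hx))
        (by simpa using fun x hx => (hf.le_iff_le (by simp [hx]) hM).mpr (hR x hx)),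
      shape_append_cons hL hR, ihL (hf.mono (by intro x; simp_all)),
      ihR (hf.mono (by intro x; simp_all))]

lemma shape_swapEntries {i : ℕ} {l : List ℕ} (hnd : l.Nodup) (h : ToggleApplies i l) :
    shape (swapEntries i l) = shape l := by
  induction l using induction_on_max with
  | nil => rfl
  | append_cons L M R hL hR ihL ihR =>
    set σ := Equiv.swap i (i + 1)
    have hiM : i + 1 < M := by
      obtain ⟨a, ha, hai, -⟩ := h
      have : a ≤ M := by
        simp only [List.mem_append, List.mem_cons] at ha
        rcases ha with ha | rfl | ha
        exacts [(hL a ha).le, le_rfl, hR a ha]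
      omega
    have hσM : σ M = M := Equiv.swap_apply_of_ne_of_ne (by omega) (by omega)
    have hσlt : ∀ x < M, σ x < M := fun x hx => by
      simp only [σ, Equiv.swap_apply_def]; split_ifs <;> omega
    have hσle : ∀ x ≤ M, σ x ≤ M := fun x hx => by
      simp only [σ, Equiv.swap_apply_def]; split_ifs <;> omega
    -- A part containing only one of `i`, `i + 1` is relabelled in an order-preserving way.
    have hpart : ∀ X : List ℕ, (i ∈ X ∧ i + 1 ∈ X → shape (X.map σ) = shape X) →
        shape (X.map σ) = shape X := fun X hX =>
      if hboth : i ∈ X ∧ i + 1 ∈ X then hX hboth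
      else shape_map_of_strictMonoOn (strictMonoOn_swap hboth)
    have hnd' : (L ++ [M] ++ R).Nodup := by rwa [← List.append_cons]
    rw [swapEntries_eq_map_swap, List.map_append, List.map_cons, hσM,
      shape_append_cons (by simpa using fun x hx => hσlt x (hL x hx))
        (by simpa using fun x hx => hσle x (hR x hx)),
      shape_append_cons hL hR, hpart R fun ⟨hi, hi1⟩ => ?_, hpart L fun ⟨hi, hi1⟩ => ?_]
    · exact ihL (List.nodup_append.mp hnd).1 (ToggleApplies.of_append_left (h := h) hi hi1)
    · rw [List.append_cons] at h
      exact ihR (List.nodup_append.mp hnd').2.1 (ToggleApplies.of_append_right (h := h)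
        (List.disjoint_of_nodup_append hnd' · hi) (List.disjoint_of_nodup_append hnd' · hi1))

lemma shape_toggle {i : ℕ} {l : List ℕ} (hnd : l.Nodup) : shape (toggle i l) = shape l := by
  unfold toggle
  split_ifs with h
  exacts [shape_swapEntries hnd h, rfl]

lemma shape_eq_of_orbitRel {n : ℕ} {l m : List ℕ} (h : OrbitRel n l m) (hl : IsPermList n l) :
    shape l = shape m :=
  h.apply_eq_of_invariant (p := IsPermList n)
    (fun _ _ ⟨_, hi, hin, hy⟩ => hy ▸ (isPermList_toggle_iff hi hin).symm)
    (fun _ _ ⟨_, _, _, hy⟩ hx => hy ▸ (shape_toggle hx.nodup).symm) hl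

def Dominates (w : List ℕ) (p q : ℕ) : Prop :=
  ∀ r, min p q ≤ r → r ≤ max p q → w.getD r 0 ≤ w.getD p 0

section Dominates

variable {X Y : List ℕ} {p q : ℕ}

lemma dominates_append_left_iff (hp : p < X.length) (hq : q < X.length) :
    Dominates (X ++ Y) p q ↔ Dominates X p q := by
  refine forall_congr' fun r => imp_congr_right fun _ => imp_congr_right fun hr => ?_
  rw [List.getD_append _ _ _ _ hp, List.getD_append _ _ _ _ (by omega)]

lemma dominates_append_right_iff :
    Dominates (X ++ Y) (X.length + p) (X.length + q) ↔ Dominates Y p q := by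
  simp only [Dominates, List.getD_append_right _ _ _ _ (Nat.le_add_right _ p),
    Nat.add_sub_cancel_left]
  constructor
  · intro h r h₁ h₂
    have := h (X.length + r) (by omega) (by omega)
    rwa [List.getD_append_right _ _ _ _ (by omega), Nat.add_sub_cancel_left] at this
  · intro h r h₁ h₂
    rw [List.getD_append_right _ _ _ _ (by omega)]
    exact h (r - X.length) (by omega) (by omega)

end Dominates

lemma Dominates.of_shape_eq {w w' : List ℕ} (hnd : w.Nodup) (hsh : shape w = shape w')
    {p q : ℕ} (hp : p < w.length) (hq : q < w.length) (h : Dominates w p q) :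
    Dominates w' p q := by
  induction w using induction_on_max generalizing w' p q with
  | nil => simp at hp
  | append_cons L M R hL hR ihL ihR =>
    have hw' : w' ≠ [] := by rintro rfl; simp [shape_append_cons hL hR, shape] at hsh
    obtain ⟨L', M', R', rfl, hL', hR'⟩ := exists_eq_append_cons_max hw'
    rw [shape_append_cons hL hR, shape_append_cons hL' hR'] at hsh
    obtain ⟨-, hshL, hshR⟩ := BinaryTree.node.inj hsh
    have hlen : L.length = L'.length := by simpa using congrArg BinaryTree.numNodes hshL
    simp only [List.length_append, List.length_cons] at hp hq
    by_cases hpt : p = L.length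
    · intro r _ _
      simpa [hpt, hlen] using getD_append_cons_le hL' hR' r
    rcases (by omega : max p q < L.length ∨ L.length < min p q ∨
      (min p q ≤ L.length ∧ L.length ≤ max p q)) with hleft | hright | hmid
    · rw [dominates_append_left_iff (by omega) (by omega)] at h ⊢
      exact ihL (List.nodup_append.mp hnd).1 hshL (by omega) (by omega) h
    · obtain ⟨p₀, rfl⟩ : ∃ p₀, p = (L ++ [M]).length + p₀ := ⟨p - (L.length + 1), by simp; omega⟩
      obtain ⟨q₀, rfl⟩ : ∃ q₀, q = (L ++ [M]).length + q₀ := ⟨q - (L.length + 1), by simp; omega⟩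
      have hlen' : (L ++ [M]).length = (L' ++ [M']).length := by simp [hlen]
      rw [List.append_cons, dominates_append_right_iff] at h
      rw [List.append_cons, hlen', dominates_append_right_iff]
      exact ihR (List.nodup_append.mp hnd).2.1.of_cons hshR (by simp at hp; omega)
        (by simp at hq; omega) h
    · have hM := h L.length hmid.1 hmid.2
      rw [List.getD_append_right _ _ _ _ le_rfl, Nat.sub_self, List.getD_cons_zero] at hM
      have := getD_append_cons_lt hnd hL hR (by simp; omega) hpt
      omega

lemma dominates_of_not_toggleApplies {i : ℕ} {w : List ℕ} (hnd : w.Nodup) (hi : i ∈ w)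
    (hi1 : i + 1 ∈ w) (h : ¬ToggleApplies i w) :
    Dominates w (w.idxOf (i + 1)) (w.idxOf i) := by
  intro r hr₁ hr₂
  rw [List.getD_idxOf hi1]
  by_contra! hgt
  have hr : r < w.length := by
    by_contra! hr
    rw [List.getD_eq_default _ _ hr] at hgt
    omega
  have hidx := hnd.idxOf_getD hr 0
  have hri : r ≠ w.idxOf i := by rintro rfl; rw [List.getD_idxOf hi] at hgt; omega
  have hri1 : r ≠ w.idxOf (i + 1) := by rintro rfl; rw [List.getD_idxOf hi1] at hgt; omega
  exact h ⟨_, List.getD_mem hr 0, hgt, by omega, by omega⟩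

def AgreeUpTo (k : ℕ) (w m : List ℕ) : Prop :=
  ∀ p < m.length, m.getD p 0 ≤ k → w.getD p 0 = m.getD p 0

section Lowering

variable {n k u : ℕ} {w m : List ℕ}

lemma toggleApplies_of_agreeUpTo {i : ℕ} (hw : IsPermList n w) (hm : IsPermList n m)
    (hsh : shape w = shape m) (hag : AgreeUpTo k w m) (hu : u < n)
    (hmu : m.getD u 0 = k + 1) (hwu : w.getD u 0 = i + 1) (hki : k < i) :
    ToggleApplies i w := by
  by_contra h
  have hwn := hw.length_eq
  have hi1 : i + 1 ∈ w := hwu ▸ List.getD_mem (by omega) 0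
  have hi : i ∈ w := hw.mem_iff.mpr (by have := hw.mem_iff.mp hi1; omega)
  set v := w.idxOf i
  have hv : v < n := hwn ▸ List.idxOf_lt_length_iff.mpr hi
  have hdom := dominates_of_not_toggleApplies hw.nodup hi hi1 h
  rw [← hwu, hw.nodup.idxOf_getD (by omega)] at hdom
  have hmv : m.getD v 0 ≤ k + 1 :=
    hmu ▸ hdom.of_shape_eq hw.nodup hsh (by omega) (by omega) v (min_le_right _ _) (le_max_right _ _)
  have hvu : v ≠ u := by
    intro hvu
    have := List.getD_idxOf hi 0
    rw [show w.idxOf i = u from hvu, hwu] at this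
    omega
  have hmv' : m.getD v 0 ≠ k + 1 := by
    intro hmv'
    have := hm.nodup.idxOf_getD (hm.length_eq ▸ hv) 0
    rw [hmv', ← hmu, hm.nodup.idxOf_getD (hm.length_eq ▸ hu)] at this
    exact hvu this.symm
  have := hag v (hm.length_eq ▸ hv) (by omega)
  rw [List.getD_idxOf hi] at this
  omega

lemma exists_orbitRel_lower (hm : IsPermList n m) (hu : u < n) (hmu : m.getD u 0 = k + 1)
    (d : ℕ) (hw : IsPermList n w) (hsh : shape w = shape m) (hag : AgreeUpTo k w m)
    (hwu : w.getD u 0 = k + 1 + d) :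
    ∃ w', OrbitRel n w w' ∧ IsPermList n w' ∧ shape w' = shape m ∧ AgreeUpTo k w' m ∧
      w'.getD u 0 = k + 1 := by
  induction d generalizing w with
  | zero => exact ⟨w, .refl w, hw, hsh, hag, hwu⟩
  | succ d ih =>
    obtain ⟨i, hi⟩ : ∃ i, i = k + 1 + d := ⟨_, rfl⟩
    replace hwu : w.getD u 0 = i + 1 := by omega
    have hin : i + 1 ≤ n := hwu ▸ (hw.getD_mem_Icc hu).2
    have hta := toggleApplies_of_agreeUpTo hw hm hsh hag hu hmu hwu (by omega)
    have hstep : ToggleStep n w (swapEntries i w) := ⟨i, by omega, by omega, by simp [toggle, hta]⟩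
    have hag₂ : AgreeUpTo k (swapEntries i w) m := by
      intro p hp hpk
      rw [getD_swapEntries (by omega), hag p hp hpk,
        Equiv.swap_apply_of_ne_of_ne (by omega) (by omega)]
    obtain ⟨w', ho, hw', hsh', hag', hwu'⟩ := ih (hw.swapEntries (by omega) (by omega))
      ((shape_swapEntries hw.nodup hta).trans hsh) hag₂
      (by rw [getD_swapEntries (by omega), hwu, Equiv.swap_apply_right, hi])
    exact ⟨w', .trans _ _ _ (.rel _ _ hstep) ho, hw', hsh', hag', hwu'⟩

lemma exists_orbitRel_agreeUpTo_succ (hk : k < n) (hm : IsPermList n m) (hw : IsPermList n w)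
    (hsh : shape w = shape m) (hag : AgreeUpTo k w m) :
    ∃ w', OrbitRel n w w' ∧ IsPermList n w' ∧ shape w' = shape m ∧ AgreeUpTo (k + 1) w' m := by
  have hk1 : k + 1 ∈ m := hm.mem_iff.mpr (by omega)
  set u := m.idxOf (k + 1)
  have hu : u < n := hm.length_eq ▸ List.idxOf_lt_length_iff.mpr hk1
  have hmu : m.getD u 0 = k + 1 := List.getD_idxOf hk1 0
  have hwu : k + 1 ≤ w.getD u 0 := by
    by_contra! hlt
    have hj : w.getD u 0 ∈ m := hm.mem_iff.mpr (by have := hw.getD_mem_Icc hu; omega)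
    set p := m.idxOf (w.getD u 0)
    have hp : p < n := hm.length_eq ▸ List.idxOf_lt_length_iff.mpr hj
    have hwp := hag p (hm.length_eq ▸ hp) (by rw [List.getD_idxOf hj]; omega)
    rw [List.getD_idxOf hj] at hwp
    have hpu : p = u := calc
      p = w.idxOf (w.getD p 0) := (hw.nodup.idxOf_getD (hw.length_eq ▸ hp) 0).symm
      _ = w.idxOf (w.getD u 0) := by rw [hwp]
      _ = u := hw.nodup.idxOf_getD (hw.length_eq ▸ hu) 0
    rw [← hpu, List.getD_idxOf hj] at hmu
    omega
  obtain ⟨w', ho, hw', hsh', hag', hwu'⟩ :=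
    exists_orbitRel_lower hm hu hmu (w.getD u 0 - (k + 1)) hw hsh hag (by omega)
  refine ⟨w', ho, hw', hsh', fun p hp hpk => ?_⟩
  rcases hpk.lt_or_eq with hpk | hpk
  · exact hag' p hp (by omega)
  · have hpu : p = u := by
      have := hm.nodup.idxOf_getD hp 0
      rw [hpk] at this
      exact this.symm
    rw [hpk, hpu, hwu']

end Lowering

lemma eq_of_agreeUpTo {n : ℕ} {w m : List ℕ} (hw : IsPermList n w) (hm : IsPermList n m)
    (hag : AgreeUpTo n w m) : w = m := by
  refine List.ext_getElem (by rw [hw.length_eq, hm.length_eq]) fun p hpw hpm => ?_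
  have := hag p hpm (hm.getD_mem_Icc (hm.length_eq ▸ hpm)).2
  rwa [List.getD_eq_getElem _ _ hpw, List.getD_eq_getElem _ _ hpm] at this

lemma orbitRel_of_shape_eq {n : ℕ} {l m : List ℕ} (hl : IsPermList n l) (hm : IsPermList n m)
    (hsh : shape l = shape m) : OrbitRel n l m := by
  have key : ∀ k ≤ n, ∃ w, OrbitRel n l w ∧ IsPermList n w ∧ shape w = shape m ∧
      AgreeUpTo k w m := by
    intro k hk
    induction k with
    | zero =>
      refine ⟨l, .refl l, hl, hsh, fun p hp hp0 => ?_⟩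
      have := hm.getD_mem_Icc (hm.length_eq ▸ hp)
      omega
    | succ k ih =>
      obtain ⟨w, ho, hw, hshw, hag⟩ := ih (by omega)
      obtain ⟨w', ho', hw', hshw', hag'⟩ := exists_orbitRel_agreeUpTo_succ hk hm hw hshw hag
      exact ⟨w', .trans _ _ _ ho ho', hw', hshw', hag'⟩
  obtain ⟨w, ho, hw, -, hag⟩ := key n le_rfl
  rwa [eq_of_agreeUpTo hw hm hag] at ho

end Polyurethane

/-- Two permutations in `Sₙ` have the same skeleton (i.e. `π⁻¹ · s(π) = σ⁻¹ · s(σ)`)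
if and only if they lie in the same orbit of the polyurethane group `𝒫ₙ`. -/
theorem sameSkeleton_iff_sameOrbit (n : ℕ) (l m : List ℕ)
    (hl : IsPermList n l) (hm : IsPermList n m) :
    skel l = skel m ↔ OrbitRel n l m := by
  rw [Polyurethane.skel_eq_postorder_shape hl, Polyurethane.skel_eq_postorder_shape hm,
    Polyurethane.postorder_injective.eq_iff]
  exact ⟨Polyurethane.orbitRel_of_shape_eq hl hm,
    fun h => Polyurethane.shape_eq_of_orbitRel h hl⟩
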